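/- arXiv:2005.06152 — 2 statements merged into one kernel-verified Lean document; each statement's English description precedes it below -/
import Mathlib

section
/- Let c be a proper edge coloring of a simple graph G, let u be a vertex, and let u_i ≠ u_j be two vertices of degree 2 adjacent to u, with c(u u_i) = i, c(u u_j) = j and i ≠ j. Suppose that for some color α ∉ {i, j}, G contains a cycle through the edge u u_i whose edges are alternately colored α and i, and a cycle through the edge u u_j whose edges are alternately colored α and j. Let c′ be obtained from c by swapping the colors of u u_i and u u_j (so c′(u u_i) = j and c′(u u_j) = i, all other edges unchanged). Then: c′ is a proper edge coloring of G; under c′, G contains no cycle through u u_i whose edges are alternately colored α and j and no cycle through u u_j whose edges are alternately colored α and i; and every cycle of G that is bichromatic under c′ is already bichromatic under c. -/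
/-
The edges of `c` colored `α` or `j` form a graph of maximum degree two in which `u` lies on a
cycle, namely the given `(α, j)`-cycle through `u uⱼ`; in such a graph everything reachable
from a cycle lies on it. A cycle through `u uᵢ` whose edges are colored `α` or `j` under `c'`
would, once `u uᵢ` is removed, join `u` to `uᵢ` by an `(α, j)`-path of `c`, putting `uᵢ` on that
cycle; but `uᵢ` has only one edge of color `α` or `j`. A cycle through `u uᵢ` that is
bichromatic under `c'` also uses the `α`-edge at `uᵢ`, so it is such an `(α, j)`-cycle; cycles
avoiding both swapped edges keep their colors.
-/

variable {V : Type*}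

/-- A proper edge coloring: any two distinct edges sharing an endpoint receive
different colors. -/
def ProperEdgeColoring (G : SimpleGraph V) (c : Sym2 V → ℕ) : Prop :=
  ∀ e₁ ∈ G.edgeSet, ∀ e₂ ∈ G.edgeSet, e₁ ≠ e₂ → (∃ x, x ∈ e₁ ∧ x ∈ e₂) → c e₁ ≠ c e₂

/-- There is a cycle of `G` through the edge `e` all of whose edges are colored `a` or `b`
(under a proper coloring, this says its edges are alternately colored `a` and `b`). -/
def CycleThroughWithColors (G : SimpleGraph V) (c : Sym2 V → ℕ) (e : Sym2 V)
    (a b : ℕ) : Prop :=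
  ∃ (v : V) (w : G.Walk v v), w.IsCycle ∧ e ∈ w.edges ∧ ∀ f ∈ w.edges, c f = a ∨ c f = b

section Coloring

variable {G : SimpleGraph V} {c : Sym2 V → ℕ}

theorem ProperEdgeColoring.ne_of_adj (hc : ProperEdgeColoring G c) {x y z : V}
    (hy : G.Adj x y) (hz : G.Adj x z) (hyz : y ≠ z) : c s(x, y) ≠ c s(x, z) :=
  hc _ hy _ hz (mt Sym2.congr_right.mp hyz) ⟨x, Sym2.mem_mk_left _ _, Sym2.mem_mk_left _ _⟩

theorem ProperEdgeColoring.encard_le_of_mapsTo (hc : ProperEdgeColoring G c) {x : V}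
    {S : Set V} (hS : S ⊆ G.neighborSet x) {T : Set ℕ}
    (hST : Set.MapsTo (fun y => c s(x, y)) S T) : S.encard ≤ T.encard :=
  Set.encard_le_encard_of_injOn hST fun _ hy _ hz h =>
    not_not.mp fun hyz => hc.ne_of_adj (hS hy) (hS hz) hyz h

end Coloring

namespace SimpleGraph

theorem eq_or_eq_of_degree_eq_two {G : SimpleGraph V} {t x y z : V} [Fintype (G.neighborSet t)]
    (h : G.degree t = 2) (hx : G.Adj t x) (hy : G.Adj t y) (hxy : x ≠ y) (hz : G.Adj t z) :
    z = x ∨ z = y := by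
  classical
  have hpair : {x, y} = G.neighborFinset t :=
    Finset.eq_of_subset_of_card_le (by simp [Finset.insert_subset_iff, hx, hy])
      (by rw [card_neighborFinset_eq_degree, h, Finset.card_pair hxy])
  simpa [← hpair] using (G.mem_neighborFinset t z).mpr hz

namespace Walk

variable {H : SimpleGraph V} {v x : V} {C : H.Walk v v}

theorem IsCycle.exists_ne_mem_edges (hC : C.IsCycle) (hx : x ∈ C.support) (y : V) :
    ∃ z, z ≠ y ∧ s(x, z) ∈ C.edges := by
  obtain ⟨z, hz, hzy⟩ := Set.exists_ne_of_one_lt_ncard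
    (by rw [hC.ncard_neighborSet_toSubgraph_eq_two hx]; norm_num) y
  exact ⟨z, hzy, adj_toSubgraph_iff_mem_edges.mp hz⟩

theorem IsCycle.encard_neighborSet_toSubgraph_eq_two (hC : C.IsCycle) (hx : x ∈ C.support) :
    (C.toSubgraph.neighborSet x).encard = 2 := by
  rw [← C.finite_neighborSet_toSubgraph.cast_ncard_eq, hC.ncard_neighborSet_toSubgraph_eq_two hx]
  rfl

theorem IsCycle.neighborSet_toSubgraph_eq (hdeg : ∀ y, (H.neighborSet y).encard ≤ 2)
    (hC : C.IsCycle) (hx : x ∈ C.support) : C.toSubgraph.neighborSet x = H.neighborSet x :=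
  C.finite_neighborSet_toSubgraph.eq_of_subset_of_encard_le (C.toSubgraph.neighborSet_subset x)
    ((hdeg x).trans (hC.encard_neighborSet_toSubgraph_eq_two hx).ge)

theorem IsCycle.mem_support_of_reachable (hdeg : ∀ y, (H.neighborSet y).encard ≤ 2)
    (hC : C.IsCycle) (hx : x ∈ C.support) {y : V} (hxy : H.Reachable x y) : y ∈ C.support := by
  obtain ⟨p⟩ := hxy
  induction p with
  | nil => exact hx
  | @cons a b _ hadj _ ih =>
    have hadj' : C.toSubgraph.Adj a b := by
      rwa [← Subgraph.mem_neighborSet, hC.neighborSet_toSubgraph_eq hdeg hx]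
    exact ih (mem_support_of_adj_toSubgraph hadj'.symm)

end Walk

end SimpleGraph

theorem ProperEdgeColoring.color_eq_of_degree_eq_two {G : SimpleGraph V} {c : Sym2 V → ℕ}
    {u t : V} {α : ℕ} [Fintype (G.neighborSet t)] (hc : ProperEdgeColoring G c)
    (hdeg : G.degree t = 2) (hcyc : CycleThroughWithColors G c s(u, t) α (c s(u, t))) {z : V}
    (hz : G.Adj t z) (hzu : z ≠ u) : c s(t, z) = α := by
  obtain ⟨v, C, hC, hmem, hcol⟩ := hcyc
  have htu : G.Adj t u := (C.adj_of_mem_edges hmem).symm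
  obtain ⟨y, hyu, hy⟩ := hC.exists_ne_mem_edges (C.snd_mem_support_of_mem_edges hmem) u
  have hty : G.Adj t y := C.adj_of_mem_edges hy
  obtain rfl : z = y :=
    (SimpleGraph.eq_or_eq_of_degree_eq_two hdeg htu hty hyu.symm hz).resolve_left hzu
  refine (hcol _ hy).resolve_right ?_
  rw [Sym2.eq_swap (a := u)]
  exact hc.ne_of_adj hty htu hyu

section Kempe

variable {G : SimpleGraph V} {c : Sym2 V → ℕ} {a b : ℕ}

/-- Its connected components are the `(a, b)`-Kempe chains of `c`. -/
def kempeGraph (G : SimpleGraph V) (c : Sym2 V → ℕ) (a b : ℕ) : SimpleGraph V where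
  Adj x y := G.Adj x y ∧ (c s(x, y) = a ∨ c s(x, y) = b)
  symm := ⟨fun x y h => ⟨h.1.symm, by rw [Sym2.eq_swap]; exact h.2⟩⟩
  loopless := ⟨fun x h => h.1.ne rfl⟩

theorem mem_edgeSet_kempeGraph {e : Sym2 V} :
    e ∈ (kempeGraph G c a b).edgeSet ↔ e ∈ G.edgeSet ∧ (c e = a ∨ c e = b) := by
  induction e using Sym2.ind
  exact Iff.rfl

theorem CycleThroughWithColors.exists_isCycle_kempeGraph {e : Sym2 V}
    (h : CycleThroughWithColors G c e a b) :
    ∃ (v : V) (w : (kempeGraph G c a b).Walk v v), w.IsCycle ∧ e ∈ w.edges := by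
  obtain ⟨v, w, hw, he, hcol⟩ := h
  have hK : ∀ f ∈ w.edges, f ∈ (kempeGraph G c a b).edgeSet := fun f hf =>
    mem_edgeSet_kempeGraph.mpr ⟨w.edges_subset_edgeSet hf, hcol f hf⟩
  exact ⟨v, w.transfer _ hK, hw.transfer hK, by rwa [SimpleGraph.Walk.edges_transfer]⟩

theorem ProperEdgeColoring.encard_neighborSet_kempeGraph_le (hc : ProperEdgeColoring G c)
    (x : V) : ((kempeGraph G c a b).neighborSet x).encard ≤ 2 :=
  calc _ ≤ ({a, b} : Set ℕ).encard := hc.encard_le_of_mapsTo (fun _ hy => hy.1) fun _ hy => hy.2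
    _ ≤ 2 := (Set.encard_insert_le _ _).trans (by simp [one_add_one_eq_two])

theorem kempeGraph_comp_swap_deleteEdges_le [DecidableEq V] {e₁ e₂ : Sym2 V} (ha : c e₁ ≠ a)
    (hb : c e₁ ≠ b) :
    (kempeGraph G (c ∘ Equiv.swap e₁ e₂) a b).deleteEdges {e₁} ≤ kempeGraph G c a b := by
  intro x y h
  rw [SimpleGraph.deleteEdges_adj, Set.mem_singleton_iff] at h
  obtain ⟨⟨hxy, hcol⟩, hne⟩ := h
  refine ⟨hxy, ?_⟩
  by_cases h₂ : s(x, y) = e₂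
  · rw [Function.comp_apply, h₂, Equiv.swap_apply_right] at hcol
    exact hcol.elim (absurd · ha) (absurd · hb)
  · rwa [Function.comp_apply, Equiv.swap_apply_of_ne_of_ne hne h₂] at hcol

end Kempe

section Swap

variable [DecidableEq V] {G : SimpleGraph V} {c : Sym2 V → ℕ} {u t s : V} {α : ℕ}

theorem ProperEdgeColoring.comp_swap_apply_left_ne (hc : ProperEdgeColoring G c)
    (hut : G.Adj u t) (hus : G.Adj u s)
    (ht : ∀ z, G.Adj t z → z ≠ u → c s(t, z) ≠ c s(u, s)) {e : Sym2 V} (he : e ∈ G.edgeSet)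
    (het : e ≠ s(u, t)) {x : V} (hxe : x ∈ e) (hx : x ∈ s(u, t)) :
    (c ∘ Equiv.swap s(u, t) s(u, s)) s(u, t) ≠ (c ∘ Equiv.swap s(u, t) s(u, s)) e := by
  simp only [Function.comp_apply, Equiv.swap_apply_left]
  by_cases hes : e = s(u, s)
  · subst hes
    rw [Equiv.swap_apply_right]
    exact hc _ hus _ hut het ⟨u, Sym2.mem_mk_left _ _, Sym2.mem_mk_left _ _⟩
  rw [Equiv.swap_apply_of_ne_of_ne het hes]
  rcases Sym2.mem_iff.mp hx with rfl | rfl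
  · exact hc _ hus e he (Ne.symm hes) ⟨x, Sym2.mem_mk_left _ _, hxe⟩
  · obtain ⟨z, rfl⟩ := Sym2.mem_iff_exists.mp hxe
    exact (ht z he fun hzu => het (hzu ▸ Sym2.eq_swap)).symm

theorem ProperEdgeColoring.comp_swap (hc : ProperEdgeColoring G c) (hut : G.Adj u t)
    (hus : G.Adj u s) (ht : ∀ z, G.Adj t z → z ≠ u → c s(t, z) ≠ c s(u, s))
    (hs : ∀ z, G.Adj s z → z ≠ u → c s(s, z) ≠ c s(u, t)) :
    ProperEdgeColoring G (c ∘ Equiv.swap s(u, t) s(u, s)) := by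
  have hs' : ∀ {e}, e ∈ G.edgeSet → e ≠ s(u, s) → ∀ {x}, x ∈ e → x ∈ s(u, s) →
      (c ∘ Equiv.swap s(u, t) s(u, s)) s(u, s) ≠ (c ∘ Equiv.swap s(u, t) s(u, s)) e := by
    rw [Equiv.swap_comm]
    exact hc.comp_swap_apply_left_ne hus hut hs
  rintro e₁ he₁ e₂ he₂ hne ⟨x, hx₁, hx₂⟩
  by_cases h₁t : e₁ = s(u, t)
  · subst h₁t; exact hc.comp_swap_apply_left_ne hut hus ht he₂ (Ne.symm hne) hx₂ hx₁
  by_cases h₁s : e₁ = s(u, s)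
  · subst h₁s; exact hs' he₂ (Ne.symm hne) hx₂ hx₁
  by_cases h₂t : e₂ = s(u, t)
  · subst h₂t; exact (hc.comp_swap_apply_left_ne hut hus ht he₁ hne hx₁ hx₂).symm
  by_cases h₂s : e₂ = s(u, s)
  · subst h₂s; exact (hs' he₁ hne hx₁ hx₂).symm
  rw [Function.comp_apply, Function.comp_apply, Equiv.swap_apply_of_ne_of_ne h₁t h₁s,
    Equiv.swap_apply_of_ne_of_ne h₂t h₂s]
  exact hc e₁ he₁ e₂ he₂ hne ⟨x, hx₁, hx₂⟩

end Swap

theorem cycleThroughWithColors_of_isCycle {G : SimpleGraph V} {d : Sym2 V → ℕ} {u t v : V}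
    {α β a b : ℕ} (hP : ∀ z, G.Adj t z → z ≠ u → d s(t, z) = α) (hβ : d s(u, t) = β)
    (hαβ : α ≠ β) {w : G.Walk v v} (hw : w.IsCycle) (hmem : s(u, t) ∈ w.edges)
    (hab : ∀ e ∈ w.edges, d e = a ∨ d e = b) : CycleThroughWithColors G d s(u, t) α β := by
  obtain ⟨y, hyu, hy⟩ := hw.exists_ne_mem_edges (w.snd_mem_support_of_mem_edges hmem) u
  have hyα := hP y (w.adj_of_mem_edges hy) hyu
  refine ⟨v, w, hw, hmem, fun e he => ?_⟩
  have hcol_e := hab e he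
  have hcol_ty := hab _ hy
  have hcol_ut := hab _ hmem
  omega

section KempeSwap

variable [DecidableEq V] {G : SimpleGraph V} {c : Sym2 V → ℕ} {u t s : V} {α : ℕ}

theorem ProperEdgeColoring.not_cycleThroughWithColors_comp_swap (hc : ProperEdgeColoring G c)
    (hP : ∀ z, G.Adj t z → z ≠ u → c s(t, z) = α) (hαt : α ≠ c s(u, t))
    (hts : c s(u, t) ≠ c s(u, s)) (hcyc : CycleThroughWithColors G c s(u, s) α (c s(u, s))) :
    ¬ CycleThroughWithColors G (c ∘ Equiv.swap s(u, t) s(u, s)) s(u, t) α (c s(u, s)) := by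
  intro hcyc'
  set K := kempeGraph G c α (c s(u, s))
  have hdeg : ∀ x, (K.neighborSet x).encard ≤ 2 := hc.encard_neighborSet_kempeGraph_le
  have hreach : K.Reachable u t := by
    obtain ⟨v, w, hw, hmem⟩ := hcyc'.exists_isCycle_kempeGraph
    exact (SimpleGraph.adj_and_reachable_delete_edges_iff_exists_cycle.mpr ⟨v, w, hw, hmem⟩).2.mono
      (kempeGraph_comp_swap_deleteEdges_le hαt.symm hts)
  obtain ⟨v, C, hC, hmem⟩ := hcyc.exists_isCycle_kempeGraph
  have ht : t ∈ C.support :=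
    hC.mem_support_of_reachable hdeg (C.fst_mem_support_of_mem_edges hmem) hreach
  have htwo : (K.neighborSet t).encard = 2 := by
    rw [← hC.neighborSet_toSubgraph_eq hdeg ht]
    exact hC.encard_neighborSet_toSubgraph_eq_two ht
  -- every `(α, c s(u, s))`-edge at `t` avoids `u`, hence is colored `α`
  have hone : (K.neighborSet t).encard ≤ ({α} : Set ℕ).encard := by
    refine hc.encard_le_of_mapsTo (fun _ hy => hy.1) fun y hy => ?_
    rcases eq_or_ne u y with rfl | hyu
    · have hcol : c s(u, t) = α ∨ c s(u, t) = c s(u, s) := by rw [Sym2.eq_swap]; exact hy.2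
      exact hcol.elim (absurd ·.symm hαt) (absurd · hts)
    · exact hP y hy.1 hyu.symm
  rw [htwo, Set.encard_singleton] at hone
  exact absurd hone (by decide)

theorem ProperEdgeColoring.not_bichromatic_comp_swap (hc : ProperEdgeColoring G c)
    (hut : G.Adj u t) (hP : ∀ z, G.Adj t z → z ≠ u → c s(t, z) = α) (hαt : α ≠ c s(u, t))
    (hαs : α ≠ c s(u, s)) (hts : c s(u, t) ≠ c s(u, s))
    (hcyc : CycleThroughWithColors G c s(u, s) α (c s(u, s))) {v : V} {w : G.Walk v v}
    (hw : w.IsCycle) (hmem : s(u, t) ∈ w.edges) :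
    ¬ ∃ a b, ∀ e ∈ w.edges, (c ∘ Equiv.swap s(u, t) s(u, s)) e = a ∨
      (c ∘ Equiv.swap s(u, t) s(u, s)) e = b := by
  rintro ⟨a, b, hab⟩
  refine hc.not_cycleThroughWithColors_comp_swap hP hαt hts hcyc
    (cycleThroughWithColors_of_isCycle (fun z hz hzu => ?_) ?_ hαs hw hmem hab)
  · have hzt : s(t, z) ≠ s(u, t) := fun h => hzu (Sym2.congr_right.mp (h.trans Sym2.eq_swap))
    have hzs : s(t, z) ≠ s(u, s) := by simp [hut.ne.symm, hzu]
    rw [Function.comp_apply, Equiv.swap_apply_of_ne_of_ne hzt hzs]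
    exact hP z hz hzu
  · rw [Function.comp_apply, Equiv.swap_apply_left]

end KempeSwap

theorem stmt_3_general [Fintype V] [DecidableEq V] (G : SimpleGraph V) [DecidableRel G.Adj]
    (c : Sym2 V → ℕ) (hc : ProperEdgeColoring G c)
    (u ui uj : V) (i j α : ℕ)
    (hadj_i : G.Adj u ui) (hadj_j : G.Adj u uj)
    (hdi : G.degree ui = 2) (hdj : G.degree uj = 2)
    (hci : c s(u, ui) = i) (hcj : c s(u, uj) = j) (hij : i ≠ j)
    (hαi : α ≠ i) (hαj : α ≠ j)
    (hcyci : CycleThroughWithColors G c s(u, ui) α i)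
    (hcycj : CycleThroughWithColors G c s(u, uj) α j)
    (c' : Sym2 V → ℕ)
    (hc' : c' = fun e => if e = s(u, ui) then j else if e = s(u, uj) then i else c e) :
    ProperEdgeColoring G c' ∧
      ¬ CycleThroughWithColors G c' s(u, ui) α j ∧
      ¬ CycleThroughWithColors G c' s(u, uj) α i ∧
      ∀ (v : V) (w : G.Walk v v), w.IsCycle →
        (∃ a b : ℕ, ∀ e ∈ w.edges, c' e = a ∨ c' e = b) →
        ∃ a b : ℕ, ∀ e ∈ w.edges, c e = a ∨ c e = b := by
  subst hci hcj
  obtain rfl : c' = c ∘ Equiv.swap s(u, ui) s(u, uj) := by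
    subst hc'
    funext e
    simp only [Function.comp_apply, Equiv.swap_apply_def, apply_ite c]
  have hPi : ∀ z, G.Adj ui z → z ≠ u → c s(ui, z) = α := fun _ =>
    hc.color_eq_of_degree_eq_two hdi hcyci
  have hPj : ∀ z, G.Adj uj z → z ≠ u → c s(uj, z) = α := fun _ =>
    hc.color_eq_of_degree_eq_two hdj hcycj
  have hswap : c ∘ Equiv.swap s(u, uj) s(u, ui) = c ∘ Equiv.swap s(u, ui) s(u, uj) := by
    rw [Equiv.swap_comm]
  refine ⟨hc.comp_swap hadj_i hadj_j (fun z hz hzu => hPi z hz hzu ▸ hαj)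
      (fun z hz hzu => hPj z hz hzu ▸ hαi),
    hc.not_cycleThroughWithColors_comp_swap hPi hαi hij hcycj,
    hswap ▸ hc.not_cycleThroughWithColors_comp_swap hPj hαj hij.symm hcyci, ?_⟩
  rintro v w hw ⟨a, b, hab⟩
  by_cases hi : s(u, ui) ∈ w.edges
  · exact absurd ⟨a, b, hab⟩ (hc.not_bichromatic_comp_swap hadj_i hPi hαi hαj hij hcycj hw hi)
  by_cases hj : s(u, uj) ∈ w.edges
  · exact absurd ⟨a, b, hswap ▸ hab⟩
      (hc.not_bichromatic_comp_swap hadj_j hPj hαj hαi hij.symm hcyci hw hj)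
  refine ⟨a, b, fun e he => ?_⟩
  rw [← Equiv.swap_apply_of_ne_of_ne (ne_of_mem_of_not_mem he hi) (ne_of_mem_of_not_mem he hj)]
  exact hab e he

/-- Swapping the colors of the edges `u uᵢ` and `u uⱼ` (where `uᵢ, uⱼ` are degree-2
neighbors of `u`, `c(u uᵢ) = i`, `c(u uⱼ) = j`, and there are an `(α, i)`-cycle through
`u uᵢ` and an `(α, j)`-cycle through `u uⱼ` for some `α ∉ {i, j}`) yields a proper edge
coloring with no `(α, j)`-cycle through `u uᵢ` and no `(α, i)`-cycle through `u uⱼ`,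
and introduces no new bichromatic cycle. -/
theorem stmt_3 [Fintype V] [DecidableEq V] (G : SimpleGraph V) [DecidableRel G.Adj]
    (c : Sym2 V → ℕ) (hc : ProperEdgeColoring G c)
    (u ui uj : V) (i j α : ℕ)
    (hadj_i : G.Adj u ui) (hadj_j : G.Adj u uj) (hne : ui ≠ uj)
    (hdi : G.degree ui = 2) (hdj : G.degree uj = 2)
    (hci : c s(u, ui) = i) (hcj : c s(u, uj) = j) (hij : i ≠ j)
    (hαi : α ≠ i) (hαj : α ≠ j)
    (hcyci : CycleThroughWithColors G c s(u, ui) α i)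
    (hcycj : CycleThroughWithColors G c s(u, uj) α j)
    (c' : Sym2 V → ℕ)
    (hc' : c' = fun e => if e = s(u, ui) then j else if e = s(u, uj) then i else c e) :
    ProperEdgeColoring G c' ∧
      ¬ CycleThroughWithColors G c' s(u, ui) α j ∧
      ¬ CycleThroughWithColors G c' s(u, uj) α i ∧
      ∀ (v : V) (w : G.Walk v v), w.IsCycle →
        (∃ a b : ℕ, ∀ e ∈ w.edges, c' e = a ∨ c' e = b) →
        ∃ a b : ℕ, ∀ e ∈ w.edges, c e = a ∨ c e = b :=
  stmt_3_general G c hc u ui uj i j α hadj_i hadj_j hdi hdj hci hcj hij hαi hαj hcyci hcycj c' hc'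
end

section
/- Let G be a simple 2-connected graph satisfying: (i) no vertex of degree 2 in G is adjacent to a vertex of degree at most 5; (ii) every vertex u of degree at least 6 that is adjacent to some 2-vertex satisfies n_2(u) + n_3(u) ≤ d(u) − 3; (iii) no vertex u of degree at least 6 adjacent to some 2-vertex satisfies both n_2(u) + n_3(u) = d(u) − 3 and n_3(u) ≤ 3. If u is a vertex of H with d_H(u) = 4 that has at least one neighbor of degree 3 in G, then d(u) = 4. -/
/-!
Since 2-connectivity rules out vertices of degree 1, `d(u) = d_H(u) + n_2(u) = 4 + n_2(u)`.
If `n_2(u) > 0`, condition (i) forces `d(u) ≥ 6`, so (ii) gives `n_3(u) ≤ 1`; hence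
`n_3(u) = 1` and `n_2(u) + n_3(u) = d(u) - 3`, which (iii) forbids.
-/

variable {V : Type*} [Fintype V] [DecidableEq V]

/-- `G` is 2-connected: it is connected, has at least 3 vertices, and deleting any
single vertex leaves it connected. -/
def TwoConnected (G : SimpleGraph V) : Prop :=
  G.Connected ∧ 3 ≤ Fintype.card V ∧
    ∀ v : V, (G.induce {w : V | w ≠ v}).Connected

/-- `nk G u m` is the number of neighbors of `u` in `G` having degree exactly `m`. -/
def nk (G : SimpleGraph V) [DecidableRel G.Adj] (u : V) (m : ℕ) : ℕ :=
  ((G.neighborFinset u).filter fun w => G.degree w = m).card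

/-- `delTwo G` is the graph `H` obtained from `G` by deleting all 2-vertices:
it keeps exactly the edges of `G` joining two vertices of degree at least 3
(deleted vertices become isolated). -/
def delTwo (G : SimpleGraph V) [DecidableRel G.Adj] : SimpleGraph V where
  Adj x y := G.Adj x y ∧ 3 ≤ G.degree x ∧ 3 ≤ G.degree y
  symm := ⟨fun x y h => ⟨h.1.symm, h.2.2, h.2.1⟩⟩
  loopless := ⟨fun x h => G.irrefl h.1⟩

instance (G : SimpleGraph V) [DecidableRel G.Adj] : DecidableRel (delTwo G).Adj :=
  fun x y => inferInstanceAs (Decidable (G.Adj x y ∧ 3 ≤ G.degree x ∧ 3 ≤ G.degree y))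

namespace SimpleGraph

variable (G : SimpleGraph V) [DecidableRel G.Adj]

lemma two_le_degree_of_adj_adj {t u w : V} (hu : G.Adj t u) (hw : G.Adj t w) (huw : u ≠ w) :
    2 ≤ G.degree t := by
  rw [← card_neighborFinset_eq_degree, ← Finset.card_pair huw]
  exact Finset.card_le_card (by simp [Finset.insert_subset_iff, hu, hw])

variable {G}

omit [DecidableEq V] in
lemma neighborFinset_delTwo {u : V} (hu : 3 ≤ G.degree u) :
    (delTwo G).neighborFinset u = (G.neighborFinset u).filter (3 ≤ G.degree ·) := by
  ext w
  simp only [mem_neighborFinset, Finset.mem_filter]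
  exact ⟨fun h => ⟨h.1, h.2.2⟩, fun h => ⟨h.1, hu, h.2⟩⟩

omit [DecidableEq V] in
lemma degree_eq_degree_delTwo_add_nk_two {u : V} (hu : 3 ≤ G.degree u)
    (hnbr : ∀ t, G.Adj u t → 2 ≤ G.degree t) :
    G.degree u = (delTwo G).degree u + nk G u 2 := by
  rw [← card_neighborFinset_eq_degree, ← card_neighborFinset_eq_degree, neighborFinset_delTwo hu,
    nk, ← Finset.card_filter_add_card_filter_not (p := (3 ≤ G.degree ·))]
  congr 2
  refine Finset.filter_congr fun t ht => ?_
  have := hnbr t ((mem_neighborFinset _ _ _).1 ht)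
  omega

end SimpleGraph

lemma TwoConnected.two_le_degree_of_adj {G : SimpleGraph V} [DecidableRel G.Adj]
    (h2c : TwoConnected G) {u t : V} (h : G.Adj u t) : 2 ≤ G.degree t := by
  have : Nontrivial {w : V | w ≠ u} := by
    rw [← Fintype.one_lt_card_iff_nontrivial, Set.card_ne_eq]
    have := h2c.2.1
    omega
  obtain ⟨⟨w, hwu⟩, htw⟩ := (h2c.2.2 u).preconnected.exists_adj_of_nontrivial ⟨t, h.ne'⟩
  exact G.two_le_degree_of_adj_adj h.symm htw (Ne.symm hwu)

/-- In a 2-connected graph satisfying (i)–(iii): if `u` is a vertex of `H` with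
`d_H(u) = 4` having at least one `G`-neighbor of degree 3, then `d(u) = 4`. -/
theorem stmt_6 (G : SimpleGraph V) [DecidableRel G.Adj]
    (h2c : TwoConnected G)
    (hi : ∀ v w : V, G.Adj v w → G.degree v = 2 → ¬ G.degree w ≤ 5)
    (hii : ∀ z : V, 6 ≤ G.degree z → (∃ t, G.Adj z t ∧ G.degree t = 2) →
      nk G z 2 + nk G z 3 ≤ G.degree z - 3)
    (hiii : ∀ z : V, 6 ≤ G.degree z → (∃ t, G.Adj z t ∧ G.degree t = 2) →
      ¬ (nk G z 2 + nk G z 3 = G.degree z - 3 ∧ nk G z 3 ≤ 3)) :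
    ∀ u : V, 3 ≤ G.degree u → (delTwo G).degree u = 4 → 1 ≤ nk G u 3 →
      G.degree u = 4 := by
  intro u hu hH4 hn3
  have hsplit : G.degree u = 4 + nk G u 2 := by
    rw [← hH4]
    exact SimpleGraph.degree_eq_degree_delTwo_add_nk_two hu fun _ => h2c.two_le_degree_of_adj
  by_contra hne
  obtain ⟨t, ht⟩ := Finset.card_ne_zero.1 (show nk G u 2 ≠ 0 by omega)
  simp only [Finset.mem_filter, SimpleGraph.mem_neighborFinset] at ht
  have h6 : 6 ≤ G.degree u := by
    have := hi t u ht.1.symm ht.2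
    omega
  have hbound := hii u h6 ⟨t, ht⟩
  exact hiii u h6 ⟨t, ht⟩ ⟨by omega, by omega⟩
end
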